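/- arXiv:1012.1066 — 2 statements merged into one kernel-verified Lean document; each statement's English description precedes it below -/
import Mathlib

section
/- Let λ be a partition of n and v_λ ∈ W_n the permutation with tab^λ = v_λ · t_λ, where tab^λ is the row-reading standard λ-tableau and t_λ the column-reading standard λ-tableau. Then the set of standard λ-tableaux equals { w·t_λ : w ≤_L v_λ }, i.e. the standard λ-tableaux are exactly the tableaux ≤_L tab^λ in the left weak order transported via t ↦ w where t = w·t_λ. -/
/-!
Sorting the pairs of positions by whether `u` and `w` put them in the same order gives
`l(w u⁻¹) = #(inversions w \ inversions u) + #(inversions u \ inversions w)`, so `u ≤_L w` iff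
`inversions u ⊆ inversions w`, i.e. iff every pair put in order by `w` is also put in order by
`u`. Transported along `t_λ`, the pairs of cells put in order by both `t_λ` and `tab^λ` are
exactly the pairs `c ≤ c'` of the componentwise order, so `w · t_λ ≤_L tab^λ` says that
`w · t_λ` is monotone, i.e. standard.
-/

noncomputable section

namespace WGTab

/-- The Coxeter length: the number of inversions. -/
def invLength {n : ℕ} (w : Equiv.Perm (Fin n)) : ℕ :=
  (Finset.univ.filter fun p : Fin n × Fin n => p.1 < p.2 ∧ w p.2 < w p.1).card

/-- A cell is a pair (row index, column index). -/
abbrev Cell (μ : YoungDiagram) : Type := {c : ℕ × ℕ // c ∈ μ}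

/-- `tc` is the column-reading tableau `t_λ`. -/
def IsColReading {n : ℕ} {μ : YoungDiagram} (tc : Cell μ ≃ Fin n) : Prop :=
  ∀ c c' : Cell μ,
    tc c < tc c' ↔ (c.1.2 < c'.1.2 ∨ (c.1.2 = c'.1.2 ∧ c.1.1 < c'.1.1))

/-- `tr` is the row-reading tableau `tab^λ`. -/
def IsRowReading {n : ℕ} {μ : YoungDiagram} (tr : Cell μ ≃ Fin n) : Prop :=
  ∀ c c' : Cell μ,
    tr c < tr c' ↔ (c.1.1 < c'.1.1 ∨ (c.1.1 = c'.1.1 ∧ c.1.2 < c'.1.2))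

def IsStdTab {n : ℕ} {μ : YoungDiagram} (t : Cell μ ≃ Fin n) : Prop :=
  ∀ c c' : Cell μ,
    ((c.1.1 = c'.1.1 ∧ c.1.2 < c'.1.2) → t c < t c') ∧
    ((c.1.2 = c'.1.2 ∧ c.1.1 < c'.1.1) → t c < t c')

def rowOf {n : ℕ} {μ : YoungDiagram} (t : Cell μ ≃ Fin n) (i : Fin n) : ℕ := (t.symm i).1.1

def colOf {n : ℕ} {μ : YoungDiagram} (t : Cell μ ≃ Fin n) (i : Fin n) : ℕ := (t.symm i).1.2

/-- The permutation `w` with `t = w · t_λ` (where `tc` plays the role of `t_λ`). -/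
def wOf {n : ℕ} {μ : YoungDiagram} (tc t : Cell μ ≃ Fin n) : Equiv.Perm (Fin n) :=
  tc.symm.trans t

/-- `u ≤_L w`, with `l(wu⁻¹) = l(w) - l(u)` written additively. -/
def WkLeP {n : ℕ} (u w : Equiv.Perm (Fin n)) : Prop :=
  invLength (w * u⁻¹) + invLength u = invLength w

def WkLtP {n : ℕ} (u w : Equiv.Perm (Fin n)) : Prop := WkLeP u w ∧ u ≠ w

section

open Finset

variable {n : ℕ}

def inversions (w : Equiv.Perm (Fin n)) : Finset (Fin n × Fin n) :=
  univ.filter fun p => p.1 < p.2 ∧ w p.2 < w p.1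

@[simp]
lemma mem_inversions {w : Equiv.Perm (Fin n)} {p : Fin n × Fin n} :
    p ∈ inversions w ↔ p.1 < p.2 ∧ w p.2 < w p.1 := by
  simp [inversions]

lemma invLength_eq_card_inversions (w : Equiv.Perm (Fin n)) :
    invLength w = #(inversions w) := rfl

lemma invLength_mul_inv (u w : Equiv.Perm (Fin n)) :
    invLength (w * u⁻¹) = #(inversions w \ inversions u) + #(inversions u \ inversions w) := by
  set disagree := univ.filter fun p : Fin n × Fin n => u p.1 < u p.2 ∧ w p.2 < w p.1
  have hdisagree : #(inversions (w * u⁻¹)) = #disagree :=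
    (card_equiv (Equiv.prodCongr u u) fun p => by simp [disagree]).symm
  have hlt : #(disagree.filter fun p => p.1 < p.2) = #(inversions w \ inversions u) := by
    congr 1
    ext ⟨i, j⟩
    simp only [disagree, mem_filter, mem_sdiff, mem_univ, true_and, mem_inversions]
    have := u.injective.ne (a₁ := i) (a₂ := j)
    grind
  have hgt : #(disagree.filter fun p => ¬ p.1 < p.2) = #(inversions u \ inversions w) := by
    refine card_equiv (Equiv.prodComm _ _) fun ⟨i, j⟩ => ?_
    simp only [disagree, mem_filter, mem_sdiff, mem_univ, true_and, mem_inversions,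
      Equiv.prodComm_apply, Prod.fst_swap, Prod.snd_swap]
    have := w.injective.ne (a₁ := i) (a₂ := j)
    grind
  rw [invLength_eq_card_inversions, hdisagree,
    ← card_filter_add_card_filter_not (fun p => p.1 < p.2), hlt, hgt]

lemma wkLeP_iff_inversions_subset (u w : Equiv.Perm (Fin n)) :
    WkLeP u w ↔ inversions u ⊆ inversions w := by
  have hu := card_sdiff_add_card_inter (inversions u) (inversions w)
  have hw := card_sdiff_add_card_inter (inversions w) (inversions u)
  rw [inter_comm] at hw
  rw [WkLeP, invLength_mul_inv, invLength_eq_card_inversions, invLength_eq_card_inversions,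
    ← sdiff_eq_empty_iff_subset, ← card_eq_zero]
  omega

lemma inversions_subset_iff (u w : Equiv.Perm (Fin n)) :
    inversions u ⊆ inversions w ↔ ∀ i j, i ≤ j → w i ≤ w j → u i ≤ u j := by
  simp only [subset_iff, mem_inversions, Prod.forall]
  refine ⟨fun h i j hij hw => ?_, fun h i j ⟨hij, hu⟩ => ⟨hij, ?_⟩⟩
  · by_contra! hu
    have := (h i j ⟨lt_of_le_of_ne hij (by rintro rfl; exact hu.false), hu⟩).2
    exact this.not_ge hw
  · by_contra! hw
    exact (h i j hij.le hw).not_gt hu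

variable {μ : YoungDiagram}

lemma le_iff_of_isColReading_of_isRowReading {tc tr : Cell μ ≃ Fin n} (htc : IsColReading tc)
    (htr : IsRowReading tr) (c c' : Cell μ) : c ≤ c' ↔ tc c ≤ tc c' ∧ tr c ≤ tr c' := by
  rw [← not_lt, ← not_lt, htc, htr, ← Subtype.coe_le_coe, Prod.le_def]
  omega

lemma isStdTab_iff_monotone (t : Cell μ ≃ Fin n) : IsStdTab t ↔ Monotone t := by
  refine ⟨fun ht c c' ⟨hrow, hcol⟩ => ?_, fun ht c c' => ?_⟩
  · let corner : Cell μ := ⟨(c'.1.1, c.1.2), μ.up_left_mem le_rfl hcol c'.2⟩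
    calc t c ≤ t corner := by
          rcases hrow.lt_or_eq with h | h
          · exact ((ht c corner).2 ⟨rfl, h⟩).le
          · exact (congrArg t (Subtype.ext (Prod.ext h rfl) : c = corner)).le
      _ ≤ t c' := by
          rcases hcol.lt_or_eq with h | h
          · exact ((ht corner c').1 ⟨rfl, h⟩).le
          · exact (congrArg t (Subtype.ext (Prod.ext rfl h) : corner = c')).le
  · have hs := ht.strictMono_of_injective t.injective
    exact ⟨fun ⟨h₁, h₂⟩ => hs (Prod.lt_iff.2 (Or.inr ⟨h₁.le, h₂⟩)),
      fun ⟨h₁, h₂⟩ => hs (Prod.lt_iff.2 (Or.inl ⟨h₂, h₁.le⟩))⟩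

@[simp]
lemma wOf_apply_apply (tc t : Cell μ ≃ Fin n) (c : Cell μ) : wOf tc t (tc c) = t c := by
  simp [wOf]

end

theorem stmt3_general (n : ℕ) (μ : YoungDiagram)
    (tc tr : Cell μ ≃ Fin n) (htc : IsColReading tc) (htr : IsRowReading tr)
    (t : Cell μ ≃ Fin n) :
    IsStdTab t ↔ WkLeP (wOf tc t) (wOf tc tr) := by
  rw [isStdTab_iff_monotone, wkLeP_iff_inversions_subset, inversions_subset_iff]
  simp only [tc.symm.forall_congr_left, Equiv.symm_symm, wOf_apply_apply, Monotone,
    le_iff_of_isColReading_of_isRowReading htc htr, and_imp]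

/-- the standard `λ`-tableaux are exactly the tableaux `w · t_λ` with
`w ≤_L v_λ`, where `tab^λ = v_λ · t_λ`. -/
theorem stmt3 (n : ℕ) (μ : YoungDiagram) (hcard : μ.cells.card = n)
    (tc tr : Cell μ ≃ Fin n) (htc : IsColReading tc) (htr : IsRowReading tr)
    (t : Cell μ ≃ Fin n) :
    IsStdTab t ↔ WkLeP (wOf tc t) (wOf tc tr) :=
  stmt3_general n μ tc tr htc htr t

end WGTab
end
end

section
/- Let 𝔍 be a W-graph ideal with respect to J and q_{y,w} the polynomials from the unique basis (c_w) with b_w = c_w + q Σ_{y<w} q_{y,w} c_y. Suppose w < sw ∈ 𝔍 and y < sw. If y = w then q_{y,sw} = 1; otherwise: (i) q_{y,sw} = q·q_{y,w} if s is an ascent of y; (ii) q_{y,sw} = −q⁻¹(q_{y,w} − μ_{y,w}) + q_{sy,w} + Σ_x μ_{y,x} q_{x,w} if s is a strong descent of y; (iii) q_{y,sw} = −q⁻¹(q_{y,w} − μ_{y,w}) + Σ_x μ_{y,x} q_{x,w} if s is a weak descent of y; where q_{y,w} and μ_{y,w} are taken as 0 if y is not < w, and the sums extend over x ∈ 𝔍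 with y < x < w and s not a descent of x. -/
open LaurentPolynomial Polynomial

noncomputable section

namespace WGI

/-- The ring `A = ℤ[q,q⁻¹]` of Laurent polynomials. -/
abbrev A : Type := LaurentPolynomial ℤ

/-- The indeterminate `q`. -/
def Q : A := LaurentPolynomial.T 1

/-- The element `q⁻¹`. -/
def Qi : A := LaurentPolynomial.T (-1)

variable {B W : Type} [Group W] {M : CoxeterMatrix B} (cs : CoxeterSystem M W)

/-- One step of the relation generating the Bruhat order: `w = tu` for a reflection `t`
(or `t = 1`) and `l(u) ≤ l(w)`. -/
def BStep (u w : W) : Prop :=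
  cs.length u ≤ cs.length w ∧ ∃ t : W, (cs.IsReflection t ∨ t = 1) ∧ w = t * u

/-- The Bruhat order on `W`: the transitive (and reflexive) closure of `BStep`. -/
def BrLe (u w : W) : Prop := Relation.ReflTransGen (BStep cs) u w

/-- Strict Bruhat order. -/
def BrLt (u w : W) : Prop := BrLe cs u w ∧ u ≠ w

/-- The left weak order: `u ≤_L w` iff `l(wu⁻¹) = l(w) - l(u)`, i.e. `u` is a suffix of `w`. -/
def WkLe (u w : W) : Prop := cs.length (w * u⁻¹) + cs.length u = cs.length w

/-- Strict left weak order. -/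
def WkLt (u w : W) : Prop := WkLe cs u w ∧ u ≠ w

/-- An ideal of `(W, ≤_L)`: a subset closed under taking suffixes. -/
def IsIdealWk (I : Set W) : Prop := ∀ u w : W, WkLe cs u w → w ∈ I → u ∈ I

/-- The set `D_J` of minimal left coset representatives of `W_J`. -/
def DD (J : Set B) : Set W := { w | ∀ j ∈ J, cs.length w < cs.length (w * cs.simple j) }

/-- Strong ascent: `sw > w` and `sw ∈ I`. -/
def SA (I : Set W) (s : B) (w : W) : Prop :=
  cs.length w < cs.length (cs.simple s * w) ∧ cs.simple s * w ∈ I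

/-- Strong descent: `sw < w`. -/
def SD (s : B) (w : W) : Prop := cs.length (cs.simple s * w) < cs.length w

/-- Weak ascent: `sw > w` and `sw ∈ D_J \ I`. -/
def WA (I : Set W) (J : Set B) (s : B) (w : W) : Prop :=
  cs.length w < cs.length (cs.simple s * w) ∧ cs.simple s * w ∈ DD cs J \ I

/-- Weak descent: `sw > w` and `sw ∉ D_J`. -/
def WD (J : Set B) (s : B) (w : W) : Prop :=
  cs.length w < cs.length (cs.simple s * w) ∧ cs.simple s * w ∉ DD cs J

/-- Descents: strong or weak. -/
def Desc (J : Set B) (s : B) (w : W) : Prop := SD cs s w ∨ WD cs J s w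

/-- Ascents: strong or weak. -/
def Asc (I : Set W) (J : Set B) (s : B) (w : W) : Prop := SA cs I s w ∨ WA cs I J s w

/-- The data making the ideal `I` (of the left weak order, contained in `D_J`) a
`W`-graph ideal with respect to `J`: an `H(W)`-module (a module together with operators
`T s` satisfying the quadratic and braid relations of the Hecke algebra) which is free
over `A` with basis indexed by `I`, on which the generators act by the four-case formula
of Definition 5.2, together with a compatible semilinear bar involution fixing `b₁`. -/
structure WGModule (I : Set W) (J : Set B) where
  V : Type
  [acg : AddCommGroup V]
  [mod : Module A V]
  ideal : IsIdealWk cs I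
  subset : I ⊆ DD cs J
  one_mem : (1 : W) ∈ I
  bas : Module.Basis I A V
  T : B → V →ₗ[A] V
  quad : ∀ s : B, (T s) ∘ₗ (T s) = LinearMap.id + (Q - Qi) • T s
  braid : ∀ s t : B,
    ((CoxeterSystem.alternatingWord s t (M s t)).map fun i => (T i : Module.End A V)).prod =
    ((CoxeterSystem.alternatingWord t s (M s t)).map fun i => (T i : Module.End A V)).prod
  /-- the polynomials `r^s_{y,w}` (divided by `q`, as elements of `ℤ[q]` with zero constant
  term they are recorded in `qℤ[q]` via `r_const`); `r s w y` is `r^s_{y,w}`. -/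
  r : B → I → (I →₀ Polynomial ℤ)
  r_const : ∀ (s : B) (w y : I), ((r s w) y).coeff 0 = 0
  r_supp : ∀ (s : B) (w y : I), (r s w) y ≠ 0 → BrLt cs (y : W) (cs.simple s * (w : W))
  act_SA : ∀ (s : B) (w : I) (h : SA cs I s (w : W)),
    T s (bas w) = bas ⟨cs.simple s * (w : W), h.2⟩
  act_SD : ∀ (s : B) (w : I), SD cs s (w : W) → ∀ h' : cs.simple s * (w : W) ∈ I,
    T s (bas w) = bas ⟨cs.simple s * (w : W), h'⟩ + (Q - Qi) • bas w
  act_WD : ∀ (s : B) (w : I), WD cs J s (w : W) → T s (bas w) = -Qi • bas w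
  act_WA : ∀ (s : B) (w : I), WA cs I J s (w : W) →
    T s (bas w) = Q • bas w - (r s w).sum fun y p => (Polynomial.toLaurent p) • bas y
  bar : V → V
  bar_add : ∀ x y : V, bar (x + y) = bar x + bar y
  bar_smul : ∀ (a : A) (x : V), bar (a • x) = (LaurentPolynomial.invert a) • bar x
  bar_one : bar (bas ⟨(1 : W), one_mem⟩) = bas ⟨(1 : W), one_mem⟩
  bar_T : ∀ (s : B) (x : V), bar (T s x) = T s (bar x) - (Q - Qi) • bar x

attribute [instance] WGModule.acg WGModule.mod

/-- `I` is a `W`-graph ideal with respect to `J`. -/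
def IsWGraphIdeal (I : Set W) (J : Set B) : Prop := Nonempty (WGModule cs I J)

open scoped Classical

/-!
The triangular family `(c_w)` is a basis, and a bar-invariant vector whose `c`-coordinates all
lie in `qℤ[q]` vanishes. By induction on `ℓ(w)`, `T_s` acts on `c_w` by the `W`-graph formula:
`T_s c_w = -q⁻¹ c_w` if `s` is a descent of `w`, and
`T_s c_w = q c_w + c_{sw} + ∑_{z < w, s descent of z} μ_{z,w} c_z` otherwise.
* Strong descent: apply the quadratic relation to the formula for `T_s c_{sw}`.
* Weak descent: `T_s c_w + q⁻¹ c_w` is bar-invariant, and by `T_s b_w = -q⁻¹ b_w` its coordinate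
  at an ascent `z` is `-(q + q⁻¹) q q_{z,w}`. Hence every `z` occurring in `b_w` is a descent,
  and `T_s b_w = -q⁻¹ b_w` becomes `T_s c_w = -q⁻¹ c_w`.
* Ascent: the difference of the two sides is bar-invariant with coordinates in `qℤ[q]`.

The recursion then comes from comparing `c_y`-coordinates in
`b_{sw} = T_s b_w = T_s c_w + ∑_z q q_{z,w} T_s c_z`.
-/

lemma Q_mul_Qi : Q * Qi = 1 := by
  rw [Q, Qi, ← T_add, add_neg_cancel, T_zero]

lemma Qi_mul_Q : Qi * Q = 1 := by
  rw [mul_comm, Q_mul_Qi]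

lemma Q_ne_zero : Q ≠ 0 := left_ne_zero_of_mul_eq_one Q_mul_Qi

lemma invert_Q : invert Q = Qi := invert_T 1

lemma invert_Qi : invert Qi = Q := by
  rw [Qi, invert_T, neg_neg, Q]

def qZq : Submodule ℤ[X] A := Submodule.span ℤ[X] {Q}

lemma mem_qZq {f : A} : f ∈ qZq ↔ ∃ p : ℤ[X], f = Q * toLaurent p := by
  simp only [qZq, Submodule.mem_span_singleton, Algebra.smul_def, algebraMap_eq_toLaurent]
  exact ⟨fun ⟨p, hp⟩ => ⟨p, by rw [← hp, mul_comm]⟩,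
    fun ⟨p, hp⟩ => ⟨p, by rw [hp, mul_comm]⟩⟩

lemma Q_mul_mem_qZq (p : ℤ[X]) : Q * toLaurent p ∈ qZq := mem_qZq.2 ⟨p, rfl⟩

lemma Q_mem_qZq : Q ∈ qZq := Submodule.mem_span_singleton_self Q

lemma mul_mem_qZq {f g : A} (hf : f ∈ (toLaurent : ℤ[X] →+* A).range) (hg : g ∈ qZq) :
    f * g ∈ qZq := by
  obtain ⟨p, rfl⟩ := hf
  simpa only [Algebra.smul_def, algebraMap_eq_toLaurent] using qZq.smul_mem p hg

lemma toLaurent_sub_coeff_zero_mem_qZq (p : ℤ[X]) :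
    toLaurent p - ((p.coeff 0 : ℤ) : A) ∈ qZq := by
  refine mem_qZq.2 ⟨p.divX, ?_⟩
  nth_rewrite 1 [← X_mul_divX_add p]
  rw [map_add, map_mul, toLaurent_X, toLaurent_C, eq_intCast, add_sub_cancel_right, Q]

lemma toLaurent_mem_qZq {p : ℤ[X]} (hp : p.coeff 0 = 0) : toLaurent p ∈ qZq := by
  simpa [hp] using toLaurent_sub_coeff_zero_mem_qZq p

lemma coeff_eq_zero_of_mem_qZq {f : A} (hf : f ∈ qZq) {m : ℤ} (hm : m ≤ 0) :
    f.coeff m = 0 := by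
  obtain ⟨p, rfl⟩ := mem_qZq.1 hf
  rw [Q, ← toLaurent_X, ← map_mul]
  by_contra h
  obtain ⟨n, hn, rfl⟩ := Finset.mem_map.1
    (support_coeff_toLaurent (X * p) ▸ Finsupp.mem_support_iff.2 h)
  obtain rfl : n = 0 := by simpa using hm
  simp at hn

/-- `f` lives in positive degrees, `invert f` in negative ones. -/
lemma eq_zero_of_mem_qZq_of_invert_eq {f : A} (hf : f ∈ qZq) (h : invert f = f) : f = 0 := by
  ext m
  rcases le_or_gt m 0 with hm | hm
  · exact coeff_eq_zero_of_mem_qZq hf hm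
  · rw [← h, invert_apply]
    exact coeff_eq_zero_of_mem_qZq hf (by omega)

lemma Q_add_Qi_ne_zero : Q + Qi ≠ 0 := by
  intro h
  have := congrArg (fun f : A => f.coeff 1) h
  simp [Q, Qi] at this

lemma eq_zero_of_mem_qZq_of_invert_Q_add_Qi_mul_eq {f : A} (hf : f ∈ qZq)
    (h : invert ((Q + Qi) * f) = (Q + Qi) * f) : f = 0 := by
  refine eq_zero_of_mem_qZq_of_invert_eq hf (mul_left_cancel₀ Q_add_Qi_ne_zero ?_)
  rwa [map_mul, map_add, invert_Q, invert_Qi, add_comm Qi] at h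

theorem _root_.Module.Basis.linearIndependent_of_repr_eq_ite {ι κ R M : Type*} [DecidableEq ι]
    [LinearOrder κ] [Ring R] [AddCommGroup M] [Module R M] (b : Module.Basis ι R M)
    {v : ι → M} (f : ι → κ)
    (h : ∀ i j, f i ≤ f j → b.repr (v i) j = if i = j then 1 else 0) :
    LinearIndependent R v := by
  rw [linearIndependent_iff]
  intro l hl
  by_contra hne
  obtain ⟨i₀, hi₀, hmax⟩ :=
    l.support.exists_max_image f (Finsupp.support_nonempty_iff.2 hne)
  have hcoord := congrArg (fun x => b.repr x i₀) hl
  simp only [Finsupp.linearCombination_apply, Finsupp.sum, map_sum, map_smul,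
    Finsupp.finsetSum_apply, Finsupp.smul_apply, smul_eq_mul, map_zero,
    Finsupp.zero_apply] at hcoord
  rw [Finset.sum_eq_single_of_mem i₀ hi₀
    (fun i hi hi₀ => by rw [h i i₀ (hmax i hi), if_neg hi₀, mul_zero]),
    h i₀ i₀ le_rfl, if_pos rfl, mul_one] at hcoord
  exact Finsupp.mem_support_iff.1 hi₀ hcoord

variable {cs}

lemma BStep.eq_or_length_lt {u w : W} (h : BStep cs u w) : u = w ∨ cs.length u < cs.length w := by
  obtain ⟨hl, t, ht | rfl, rfl⟩ := h
  · refine Or.inr (lt_of_le_of_ne hl fun hEq => ?_)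
    obtain ⟨k, hk⟩ := ht.odd_length
    have := cs.length_mul_mod_two t u
    omega
  · exact Or.inl (one_mul u).symm

lemma BrLe.eq_or_length_lt {u w : W} (h : BrLe cs u w) : u = w ∨ cs.length u < cs.length w := by
  induction h with
  | refl => exact Or.inl rfl
  | tail _ hstep ih =>
    rcases ih with rfl | hlt
    · exact hstep.eq_or_length_lt
    · rcases hstep.eq_or_length_lt with rfl | hlt'
      · exact Or.inr hlt
      · exact Or.inr (hlt.trans hlt')

lemma BrLt.length_lt {u w : W} (h : BrLt cs u w) : cs.length u < cs.length w :=
  h.1.eq_or_length_lt.resolve_left h.2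

lemma length_lt_length_simple_mul_of_not_desc {J : Set B} {s : B} {x : W}
    (h : ¬ Desc cs J s x) : cs.length x < cs.length (cs.simple s * x) := by
  have := cs.length_simple_mul_ne x s
  have : ¬ cs.length (cs.simple s * x) < cs.length x := fun hlt => h (Or.inl hlt)
  omega

lemma simple_mul_mem_of_SD {I : Set W} (hI : IsIdealWk cs I) {s : B} {x : W} (hx : x ∈ I)
    (h : SD cs s x) : cs.simple s * x ∈ I := by
  refine hI _ x ?_ hx
  have : x * (cs.simple s * x)⁻¹ = cs.simple s := by
    rw [mul_inv_rev, cs.inv_simple, mul_inv_cancel_left]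
  rw [WkLe, this, cs.length_simple]
  have := cs.length_simple_mul x s
  unfold SD at h
  omega

lemma asc_of_not_desc {I : Set W} {J : Set B} {s : B} {x : W} (h : ¬ Desc cs J s x) :
    Asc cs I J s x := by
  by_cases hm : cs.simple s * x ∈ I
  · exact Or.inl ⟨length_lt_length_simple_mul_of_not_desc h, hm⟩
  · exact Or.inr ⟨length_lt_length_simple_mul_of_not_desc h,
      not_not.1 fun hD => h (Or.inr ⟨length_lt_length_simple_mul_of_not_desc h, hD⟩), hm⟩

lemma not_desc_of_asc {I : Set W} {J : Set B} (hIJ : I ⊆ DD cs J) {s : B} {x : W}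
    (h : Asc cs I J s x) : ¬ Desc cs J s x := by
  rintro (hd | hd)
  · rcases h with ⟨hlt, _⟩ | ⟨hlt, _⟩ <;> exact (lt_asymm hd hlt)
  · rcases h with ⟨_, hm⟩ | ⟨_, hm, _⟩
    · exact hd.2 (hIJ hm)
    · exact hd.2 hm

lemma SD_simple_mul_of_not_desc {J : Set B} {s : B} {x : W} (h : ¬ Desc cs J s x) :
    SD cs s (cs.simple s * x) := by
  rw [SD, cs.simple_mul_simple_cancel_left]
  exact length_lt_length_simple_mul_of_not_desc h

lemma not_desc_simple_mul_of_SD {I : Set W} {J : Set B} (hIJ : I ⊆ DD cs J) {s : B} {x : W}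
    (hx : x ∈ I) (h : SD cs s x) : ¬ Desc cs J s (cs.simple s * x) := by
  refine not_desc_of_asc hIJ (Or.inl ⟨?_, ?_⟩) <;> rw [cs.simple_mul_simple_cancel_left]
  exacts [h, hx]

section CBasis

variable {I : Set W} {J : Set B} {D : WGModule cs I J} {c : I → D.V} {qp : I → I →₀ ℤ[X]}

def WGModule.barHom (D : WGModule cs I J) : D.V →+ D.V := AddMonoidHom.mk' D.bar D.bar_add

lemma WGModule.barHom_apply (D : WGModule cs I J) (v : D.V) : D.barHom v = D.bar v := rfl

lemma WGModule.bar_sub (D : WGModule cs I J) (x y : D.V) : D.bar (x - y) = D.bar x - D.bar y :=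
  map_sub D.barHom x y

lemma length_lt_of_mem_support (hsupp : ∀ w y : I, qp w y ≠ 0 → BrLt cs (y : W) (w : W))
    {w z : I} (hz : z ∈ (qp w).support) : cs.length (z : W) < cs.length (w : W) :=
  (hsupp w z (Finsupp.mem_support_iff.1 hz)).length_lt

lemma bas_repr_c (hsupp : ∀ w y : I, qp w y ≠ 0 → BrLt cs (y : W) (w : W))
    (htrans : ∀ w : I,
      D.bas w = c w + (qp w).sum fun y p => (Q * Polynomial.toLaurent p) • c y)
    (w j : I) (hwj : cs.length (w : W) ≤ cs.length (j : W)) :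
    D.bas.repr (c w) j = if w = j then 1 else 0 := by
  induction hn : cs.length (w : W) using Nat.strong_induction_on generalizing w with
  | _ n ih =>
  rw [eq_sub_of_add_eq (htrans w).symm, Finsupp.sum, map_sub, map_sum, Finsupp.sub_apply,
    Finsupp.finsetSum_apply, D.bas.repr_self, Finsupp.single_apply, Finset.sum_eq_zero, sub_zero]
  intro z hz
  have hzw := length_lt_of_mem_support hsupp hz
  rw [map_smul, Finsupp.smul_apply, ih _ (hn ▸ hzw) z (by omega) rfl,
    if_neg (by rintro rfl; omega), smul_zero]

variable (hsupp : ∀ w y : I, qp w y ≠ 0 → BrLt cs (y : W) (w : W))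
  (htrans : ∀ w : I,
    D.bas w = c w + (qp w).sum fun y p => (Q * Polynomial.toLaurent p) • c y)

def cBasis : Module.Basis I A D.V :=
  .mk (D.bas.linearIndependent_of_repr_eq_ite (fun w : I => cs.length (w : W))
      (bas_repr_c hsupp htrans)) <| by
    rw [← D.bas.span_eq, Submodule.span_le]
    rintro _ ⟨w, rfl⟩
    rw [htrans w]
    exact add_mem (Submodule.subset_span ⟨w, rfl⟩)
      (Submodule.sum_mem _ fun z _ => Submodule.smul_mem _ _ (Submodule.subset_span ⟨z, rfl⟩))

lemma coe_cBasis : ⇑(cBasis hsupp htrans) = c := Module.Basis.coe_mk _ _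

lemma cBasis_repr_c (z y : I) : (cBasis hsupp htrans).repr (c z) y = if z = y then 1 else 0 := by
  rw [← Finsupp.single_apply, ← (cBasis hsupp htrans).repr_self z, coe_cBasis]

lemma cBasis_repr_smul_c (a : A) (z y : I) :
    (cBasis hsupp htrans).repr (a • c z) y = if z = y then a else 0 := by
  rw [map_smul, Finsupp.smul_apply, cBasis_repr_c, smul_eq_mul, mul_ite, mul_one, mul_zero]

lemma cBasis_repr_sum_smul_c (F : Finset I) (a : I → A) (y : I) :
    (cBasis hsupp htrans).repr (∑ z ∈ F, a z • c z) y = if y ∈ F then a y else 0 := by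
  simp only [map_sum, Finsupp.finsetSum_apply, cBasis_repr_smul_c, Finset.sum_ite_eq']

lemma cBasis_repr_bas (w y : I) :
    (cBasis hsupp htrans).repr (D.bas w) y
      = (if w = y then 1 else 0) + Q * Polynomial.toLaurent (qp w y) := by
  rw [htrans w, Finsupp.sum, map_add, Finsupp.add_apply, cBasis_repr_c, cBasis_repr_sum_smul_c]
  congr 1
  split_ifs with h
  · rfl
  · rw [Finsupp.notMem_support_iff.1 h, map_zero, mul_zero]

lemma cBasis_repr_bar (hcbar : ∀ w : I, D.bar (c w) = c w) (v : D.V) (y : I) :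
    (cBasis hsupp htrans).repr (D.bar v) y = invert ((cBasis hsupp htrans).repr v y) := by
  set b := cBasis hsupp htrans
  have hbar : D.bar v = Finsupp.linearCombination A b
      ((b.repr v).mapRange invert (map_zero _)) := by
    conv_lhs => rw [← b.linearCombination_repr v]
    rw [Finsupp.linearCombination_apply, Finsupp.linearCombination_apply,
      Finsupp.sum_mapRange_index (h := fun z a => a • b z) fun _ => zero_smul _ _,
      ← D.barHom_apply, map_finsuppSum]
    refine Finsupp.sum_congr fun z _ => ?_
    rw [D.barHom_apply, D.bar_smul, coe_cBasis, hcbar]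
  rw [hbar, b.repr_linearCombination, Finsupp.mapRange_apply]

lemma eq_zero_of_bar_eq (hcbar : ∀ w : I, D.bar (c w) = c w) {v : D.V} (hv : D.bar v = v)
    (h : ∀ y, (cBasis hsupp htrans).repr v y ∈ qZq) : v = 0 :=
  (cBasis hsupp htrans).ext_elem fun y => by
    rw [map_zero, Finsupp.zero_apply]
    exact eq_zero_of_mem_qZq_of_invert_eq (h y)
      (by rw [← cBasis_repr_bar hsupp htrans hcbar, hv])

end CBasis

section WGraphAction

variable {I : Set W} {J : Set B} {D : WGModule cs I J} {c : I → D.V} {qp : I → I →₀ ℤ[X]}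

/-- `mu qp y w` is `μ_{y,w}`. -/
def mu (qp : I → I →₀ ℤ[X]) (y w : I) : A := ((qp w y).coeff 0 : ℤ)

def cSimpleMul (c : I → D.V) (s : B) (w : I) : D.V :=
  if h : cs.simple s * (w : W) ∈ I then c ⟨_, h⟩ else 0

def muSum (c : I → D.V) (qp : I → I →₀ ℤ[X]) (s : B) (w : I) : D.V :=
  ∑ z ∈ (qp w).support, (if Desc cs J s (z : W) then mu qp z w else 0) • c z

/-- The action of `T_s` on `c_w` prescribed by the `W`-graph with edge weights `μ`. -/
def wgAction (c : I → D.V) (qp : I → I →₀ ℤ[X]) (s : B) (w : I) : D.V :=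
  if Desc cs J s (w : W) then -Qi • c w else Q • c w + cSimpleMul c s w + muSum c qp s w

/-- The `c_y`-coordinate of `∑_z q q_{z,w} T_s c_z`, once `T_s c_z = wgAction c qp s z`. -/
def tailCoord (cs : CoxeterSystem M W) (J : Set B) (qp : I → I →₀ ℤ[X]) (s : B) (w y : I) :
    A :=
  (if Desc cs J s (y : W) then -toLaurent (qp w y) else Q ^ 2 * toLaurent (qp w y))
    + (if h : cs.simple s * (y : W) ∈ I then
        if Desc cs J s (cs.simple s * (y : W)) then 0 else Q * toLaurent (qp w ⟨_, h⟩)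
      else 0)
    + if Desc cs J s (y : W) then
        ∑ z ∈ (qp w).support,
          if Desc cs J s (z : W) then 0 else Q * toLaurent (qp w z) * mu qp y z
      else 0

lemma sum_ite_simple_mul_eq (S : Finset I) (g : I → A) (hg : ∀ z ∉ S, g z = 0) (s : B)
    (y : I) :
    ∑ z ∈ S, (if cs.simple s * (z : W) = y then g z else 0)
      = if h : cs.simple s * (y : W) ∈ I then g ⟨_, h⟩ else 0 := by
  have hiff : ∀ z : I, cs.simple s * (z : W) = y ↔ (z : W) = cs.simple s * y := fun z => by
    constructor
    · intro h; rw [← h, cs.simple_mul_simple_cancel_left]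
    · intro h; rw [h, cs.simple_mul_simple_cancel_left]
  split_ifs with h
  · simp_rw [hiff, ← Subtype.ext_iff (a2 := (⟨_, h⟩ : I)), Finset.sum_ite_eq']
    split_ifs with hS
    · rfl
    · exact (hg _ hS).symm
  · refine Finset.sum_eq_zero fun z _ => if_neg fun hz => h ?_
    rw [← (hiff z).1 hz]
    exact z.2

lemma tailCoord_of_not_desc {s : B} (w : I) {y : I}
    (hy : ¬ Desc cs J s (y : W)) : tailCoord cs J qp s w y = Q ^ 2 * toLaurent (qp w y) := by
  rw [tailCoord, if_neg hy, if_neg hy, add_zero, add_eq_left, dite_eq_right_iff]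
  exact fun _ => if_pos (Or.inl (SD_simple_mul_of_not_desc hy))

lemma tailCoord_add_mem_qZq (s : B) (w y : I) :
    tailCoord cs J qp s w y + (if Desc cs J s (y : W) then mu qp y w else 0) ∈ qZq := by
  have hU : (if h : cs.simple s * (y : W) ∈ I then
      if Desc cs J s (cs.simple s * (y : W)) then 0 else Q * toLaurent (qp w ⟨_, h⟩)
      else 0) ∈ qZq := by
    split_ifs
    exacts [zero_mem _, Q_mul_mem_qZq _, zero_mem _]
  rw [tailCoord]
  by_cases hy : Desc cs J s (y : W)
  · have hS : ∑ z ∈ (qp w).support, (if Desc cs J s (z : W) then 0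
        else Q * toLaurent (qp w z) * mu qp y z) ∈ qZq := by
      refine sum_mem fun z _ => ?_
      split_ifs
      · exact zero_mem _
      · convert mul_mem_qZq ⟨qp w z * Polynomial.C ((qp z y).coeff 0), rfl⟩ Q_mem_qZq using 1
        rw [map_mul, toLaurent_C, eq_intCast, mu]
        ring
    rw [if_pos hy, if_pos hy, if_pos hy]
    convert add_mem (add_mem (neg_mem (toLaurent_sub_coeff_zero_mem_qZq (qp w y))) hU) hS
      using 1
    rw [mu]
    ring
  · rw [if_neg hy, if_neg hy, if_neg hy, add_zero, add_zero]
    refine add_mem ?_ hU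
    rw [sq, mul_assoc]
    exact mul_mem_qZq ⟨X, toLaurent_X⟩ (Q_mul_mem_qZq _)

variable (hsupp : ∀ w y : I, qp w y ≠ 0 → BrLt cs (y : W) (w : W))
  (htrans : ∀ w : I,
    D.bas w = c w + (qp w).sum fun y p => (Q * Polynomial.toLaurent p) • c y)

lemma cBasis_repr_cSimpleMul (s : B) (w y : I) :
    (cBasis hsupp htrans).repr (cSimpleMul c s w) y
      = if cs.simple s * (w : W) = y then 1 else 0 := by
  rw [cSimpleMul]
  split_ifs with h hy hy
  · rw [cBasis_repr_c, if_pos (Subtype.ext hy)]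
  · rw [cBasis_repr_c, if_neg fun h' => hy (congrArg Subtype.val h')]
  · exact absurd (hy ▸ y.2) h
  · rw [map_zero, Finsupp.zero_apply]

lemma cBasis_repr_muSum (s : B) (w y : I) :
    (cBasis hsupp htrans).repr (muSum c qp s w) y
      = if Desc cs J s (y : W) then mu qp y w else 0 := by
  rw [muSum, cBasis_repr_sum_smul_c]
  by_cases h : y ∈ (qp w).support
  · rw [if_pos h]
  · rw [if_neg h, mu, Finsupp.notMem_support_iff.1 h, Polynomial.coeff_zero, Int.cast_zero,
      ite_self]

lemma cBasis_repr_wgAction (s : B) (z y : I) :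
    (cBasis hsupp htrans).repr (wgAction c qp s z) y
      = if Desc cs J s (z : W) then (if z = y then -Qi else 0)
        else (if z = y then Q else 0) + (if cs.simple s * (z : W) = y then 1 else 0)
          + if Desc cs J s (y : W) then mu qp y z else 0 := by
  rw [wgAction]
  by_cases hz : Desc cs J s (z : W)
  · rw [if_pos hz, if_pos hz, cBasis_repr_smul_c]
  · rw [if_neg hz, if_neg hz, map_add, map_add, Finsupp.add_apply, Finsupp.add_apply,
      cBasis_repr_smul_c, cBasis_repr_cSimpleMul, cBasis_repr_muSum]

lemma cBasis_repr_sum_T (s : B) (w : I)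
    (hT : ∀ z ∈ (qp w).support, D.T s (c z) = wgAction c qp s z) (y : I) :
    (cBasis hsupp htrans).repr
        (∑ z ∈ (qp w).support, (Q * toLaurent (qp w z)) • D.T s (c z)) y
      = tailCoord cs J qp s w y := by
  set p : I → A := fun z => toLaurent (qp w z)
  have hterm : ∀ z ∈ (qp w).support,
      (cBasis hsupp htrans).repr ((Q * p z) • D.T s (c z)) y
        = (if z = y then (if Desc cs J s (y : W) then -p y else Q ^ 2 * p y) else 0)
          + (if cs.simple s * (z : W) = y then
              (if Desc cs J s (z : W) then 0 else Q * p z) else 0)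
          + if Desc cs J s (y : W) then
              (if Desc cs J s (z : W) then 0 else Q * p z * mu qp y z) else 0 := by
    intro z hz
    rw [map_smul, Finsupp.smul_apply, smul_eq_mul, hT z hz, cBasis_repr_wgAction]
    by_cases hzy : z = y
    · subst hzy
      have hsz : cs.simple s * (z : W) ≠ z := fun h =>
        cs.length_simple_mul_ne (z : W) s (by rw [h])
      by_cases hd : Desc cs J s (z : W)
      · simp only [if_neg hsz, if_pos hd, if_true]
        linear_combination (-p z) * Q_mul_Qi
      · simp only [if_neg hsz, if_neg hd, if_true]
        ring
    · by_cases hd : Desc cs J s (z : W) <;>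
        simp only [if_neg hzy, hd, if_true, if_false] <;> split_ifs <;> ring
  rw [map_sum, Finsupp.finsetSum_apply, Finset.sum_congr rfl hterm, Finset.sum_add_distrib,
    Finset.sum_add_distrib, Finset.sum_ite_eq', Finset.sum_ite_irrel, Finset.sum_const_zero,
    sum_ite_simple_mul_eq _ (fun z => if Desc cs J s (z : W) then 0 else Q * p z)
      (fun z hz => by simp [p, Finsupp.notMem_support_iff.1 hz]), tailCoord]
  congr 2
  by_cases h : y ∈ (qp w).support
  · rw [if_pos h]
  · rw [if_neg h, Finsupp.notMem_support_iff.1 h, map_zero, neg_zero, mul_zero, ite_self]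

lemma cBasis_repr_T_bas (s : B) (w : I)
    (hT : ∀ z ∈ (qp w).support, D.T s (c z) = wgAction c qp s z) (y : I) :
    (cBasis hsupp htrans).repr (D.T s (D.bas w)) y
      = (cBasis hsupp htrans).repr (D.T s (c w)) y + tailCoord cs J qp s w y := by
  rw [← cBasis_repr_sum_T hsupp htrans s w hT, htrans w, Finsupp.sum, map_add, map_add,
    Finsupp.add_apply]
  simp only [map_sum, map_smul]

lemma cBasis_repr_T_bas_sub_mem_qZq {s : B} {w : I} (hw : ¬ Desc cs J s (w : W)) (y : I) :
    (cBasis hsupp htrans).repr (D.T s (D.bas w)) y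
      - (if cs.simple s * (w : W) = y then 1 else 0) ∈ qZq := by
  have hrange : ∀ t : I, (if t = y then 1 else 0) + Q * toLaurent (qp t y)
      ∈ (toLaurent : ℤ[X] →+* A).range := fun t => by
    refine add_mem ?_ (mul_mem ⟨X, toLaurent_X⟩ ⟨_, rfl⟩)
    split_ifs
    exacts [one_mem _, zero_mem _]
  rcases asc_of_not_desc (I := I) hw with hsa | hwa
  · rw [D.act_SA s w hsa, cBasis_repr_bas]
    convert Q_mul_mem_qZq (qp ⟨_, hsa.2⟩ y) using 1
    simp [Subtype.ext_iff]
  · have hsw : cs.simple s * (w : W) ≠ y := fun h => hwa.2.2 (h ▸ y.2)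
    rw [D.act_WA s w hwa, Finsupp.sum, if_neg hsw, sub_zero, map_sub, Finsupp.sub_apply,
      map_smul, Finsupp.smul_apply, smul_eq_mul, cBasis_repr_bas, map_sum,
      Finsupp.finsetSum_apply]
    refine sub_mem (mul_comm Q _ ▸ mul_mem_qZq (hrange w) Q_mem_qZq) (sum_mem fun t _ => ?_)
    rw [map_smul, Finsupp.smul_apply, smul_eq_mul, cBasis_repr_bas, mul_comm]
    exact mul_mem_qZq (hrange t) (toLaurent_mem_qZq (D.r_const s w t))

end WGraphAction

section WGraphProperty

variable {I : Set W} {J : Set B} {D : WGModule cs I J} {c : I → D.V} {qp : I → I →₀ ℤ[X]}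

lemma bar_cSimpleMul (hcbar : ∀ w : I, D.bar (c w) = c w) (s : B) (w : I) :
    D.bar (cSimpleMul c s w) = cSimpleMul c s w := by
  rw [cSimpleMul]
  split_ifs
  · exact hcbar _
  · exact map_zero D.barHom

lemma bar_muSum (hcbar : ∀ w : I, D.bar (c w) = c w) (s : B) (w : I) :
    D.bar (muSum c qp s w) = muSum c qp s w := by
  rw [muSum, ← D.barHom_apply, map_sum]
  refine Finset.sum_congr rfl fun z _ => ?_
  rw [D.barHom_apply, D.bar_smul, hcbar, apply_ite invert, mu, map_intCast, map_zero]

lemma T_c_eq_wgAction_of_SD (hsupp : ∀ w y : I, qp w y ≠ 0 → BrLt cs (y : W) (w : W))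
    {s : B} {w : I}
    (IH : ∀ z : I, cs.length (z : W) < cs.length (w : W) → D.T s (c z) = wgAction c qp s z)
    (hsd : SD cs s (w : W)) : D.T s (c w) = wgAction c qp s w := by
  set u : I := ⟨_, simple_mul_mem_of_SD D.ideal w.2 hsd⟩
  have hu : cs.length (u : W) < cs.length (w : W) := hsd
  have hsu : cs.simple s * (u : W) = w := cs.simple_mul_simple_cancel_left _
  have hTu : D.T s (c u) = Q • c u + c w + muSum c qp s u := by
    rw [IH u hu, wgAction, if_neg (not_desc_simple_mul_of_SD D.subset w.2 hsd), cSimpleMul,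
      dif_pos (hsu ▸ w.2)]
    simp only [hsu]
  have hTm : D.T s (muSum c qp s u) = -Qi • muSum c qp s u := by
    rw [muSum, map_sum, Finset.smul_sum]
    refine Finset.sum_congr rfl fun z hz => ?_
    rw [map_smul, smul_comm]
    by_cases hd : Desc cs J s (z : W)
    · rw [IH z ((length_lt_of_mem_support hsupp hz).trans hu), wgAction, if_pos hd, if_pos hd]
    · rw [if_neg hd, zero_smul, zero_smul]
  have hquad : D.T s (D.T s (c u)) = c u + (Q - Qi) • D.T s (c u) := by
    simpa using LinearMap.congr_fun (D.quad s) (c u)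
  have hTw : D.T s (c w)
      = c u + (Q - Qi) • D.T s (c u) - Q • D.T s (c u) + Qi • muSum c qp s u := by
    have h := congrArg (D.T s) hTu
    rw [hquad, map_add, map_add, map_smul, hTm] at h
    linear_combination (norm := module) -h
  rw [wgAction, if_pos (show Desc cs J s (w : W) from Or.inl hsd), hTw, hTu]
  linear_combination (norm := module) -(Qi_mul_Q • c u)

lemma T_c_eq_wgAction_of_WD (hcbar : ∀ w : I, D.bar (c w) = c w)
    (hsupp : ∀ w y : I, qp w y ≠ 0 → BrLt cs (y : W) (w : W))
    (htrans : ∀ w : I,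
      D.bas w = c w + (qp w).sum fun y p => (Q * Polynomial.toLaurent p) • c y)
    {s : B} {w : I}
    (IH : ∀ z : I, cs.length (z : W) < cs.length (w : W) → D.T s (c z) = wgAction c qp s z)
    (hwd : WD cs J s (w : W)) : D.T s (c w) = wgAction c qp s w := by
  have hT : ∀ z ∈ (qp w).support, D.T s (c z) = wgAction c qp s z :=
    fun z hz => IH z (length_lt_of_mem_support hsupp hz)
  have hdesc : ∀ z ∈ (qp w).support, Desc cs J s (z : W) := by
    intro z hz
    by_contra hnd
    have hzw : w ≠ z := fun h => (hsupp w z (Finsupp.mem_support_iff.1 hz)).2 (by rw [h])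
    set G := D.T s (c w) + Qi • c w
    have hG : (cBasis hsupp htrans).repr G z = -((Q + Qi) * (Q * toLaurent (qp w z))) := by
      have h := cBasis_repr_T_bas hsupp htrans s w hT z
      rw [D.act_WD s w hwd, map_smul, Finsupp.smul_apply, smul_eq_mul, cBasis_repr_bas,
        if_neg hzw, tailCoord_of_not_desc w hnd] at h
      rw [map_add, Finsupp.add_apply, cBasis_repr_smul_c, if_neg hzw, add_zero]
      linear_combination -h
    have hbar : D.bar G = G := by
      rw [D.bar_add, D.bar_T, D.bar_smul, hcbar, invert_Qi]
      module
    have hinv := cBasis_repr_bar hsupp htrans hcbar G z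
    rw [hbar, hG, map_neg, neg_inj] at hinv
    have hQp := eq_zero_of_mem_qZq_of_invert_Q_add_Qi_mul_eq (Q_mul_mem_qZq _) hinv.symm
    rw [mul_eq_zero, or_iff_right Q_ne_zero, map_eq_zero_iff _ toLaurent_injective] at hQp
    exact Finsupp.mem_support_iff.1 hz hQp
  have hb := D.act_WD s w hwd
  rw [htrans w, Finsupp.sum, map_add, map_sum, smul_add, Finset.smul_sum] at hb
  rw [Finset.sum_congr rfl fun z hz => by
    rw [map_smul, hT z hz, wgAction, if_pos (hdesc z hz), smul_comm]] at hb
  rw [wgAction, if_pos (show Desc cs J s (w : W) from Or.inr hwd)]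
  exact add_right_cancel hb

lemma T_c_eq_wgAction_of_not_desc (hcbar : ∀ w : I, D.bar (c w) = c w)
    (hsupp : ∀ w y : I, qp w y ≠ 0 → BrLt cs (y : W) (w : W))
    (htrans : ∀ w : I,
      D.bas w = c w + (qp w).sum fun y p => (Q * Polynomial.toLaurent p) • c y)
    {s : B} {w : I}
    (IH : ∀ z : I, cs.length (z : W) < cs.length (w : W) → D.T s (c z) = wgAction c qp s z)
    (hw : ¬ Desc cs J s (w : W)) : D.T s (c w) = wgAction c qp s w := by
  have hT : ∀ z ∈ (qp w).support, D.T s (c z) = wgAction c qp s z :=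
    fun z hz => IH z (length_lt_of_mem_support hsupp hz)
  rw [wgAction, if_neg hw, ← sub_eq_zero]
  refine eq_zero_of_bar_eq hsupp htrans hcbar ?_ fun y => ?_
  · rw [D.bar_sub, D.bar_add, D.bar_add, D.bar_T, D.bar_smul, hcbar, invert_Q,
      bar_cSimpleMul hcbar, bar_muSum hcbar]
    module
  · have hQ : (if w = y then Q else 0) ∈ qZq := by
      split_ifs
      exacts [Q_mem_qZq, zero_mem _]
    convert sub_mem (sub_mem (cBasis_repr_T_bas_sub_mem_qZq hsupp htrans hw y) hQ)
      (tailCoord_add_mem_qZq s w y) using 1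
    rw [cBasis_repr_T_bas hsupp htrans s w hT, map_sub, Finsupp.sub_apply, map_add, map_add,
      Finsupp.add_apply, Finsupp.add_apply, cBasis_repr_smul_c, cBasis_repr_cSimpleMul,
      cBasis_repr_muSum]
    ring

theorem T_c_eq_wgAction (hcbar : ∀ w : I, D.bar (c w) = c w)
    (hsupp : ∀ w y : I, qp w y ≠ 0 → BrLt cs (y : W) (w : W))
    (htrans : ∀ w : I,
      D.bas w = c w + (qp w).sum fun y p => (Q * Polynomial.toLaurent p) • c y)
    (s : B) (w : I) : D.T s (c w) = wgAction c qp s w := by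
  induction hn : cs.length (w : W) using Nat.strong_induction_on generalizing w with
  | _ n ih =>
  have IH : ∀ z : I, cs.length (z : W) < cs.length (w : W) → D.T s (c z) = wgAction c qp s z :=
    fun z hz => ih _ (hn ▸ hz) z rfl
  by_cases hd : Desc cs J s (w : W)
  · rcases hd with hsd | hwd
    · exact T_c_eq_wgAction_of_SD hsupp IH hsd
    · exact T_c_eq_wgAction_of_WD hcbar hsupp htrans IH hwd
  · exact T_c_eq_wgAction_of_not_desc hcbar hsupp htrans IH hd

end WGraphProperty

section Recursion

variable {I : Set W} {J : Set B} {D : WGModule cs I J} {c : I → D.V} {qp : I → I →₀ ℤ[X]}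

lemma Qi_mul_sum_mu_eq (hsupp : ∀ w y : I, qp w y ≠ 0 → BrLt cs (y : W) (w : W)) (s : B)
    (w y : I) :
    Qi * ∑ z ∈ (qp w).support,
        (if Desc cs J s (z : W) then 0 else Q * toLaurent (qp w z) * mu qp y z)
      = ∑ x ∈ (qp w).support, if BrLt cs (y : W) (x : W) ∧ ¬ Desc cs J s (x : W) then
          mu qp y x * toLaurent (qp w x) else 0 := by
  rw [Finset.mul_sum]
  refine Finset.sum_congr rfl fun x _ => ?_
  by_cases hd : Desc cs J s (x : W)
  · simp [hd]
  by_cases hyx : BrLt cs (y : W) (x : W)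
  · rw [if_neg hd, if_pos ⟨hyx, hd⟩]
    linear_combination (mu qp y x * toLaurent (qp w x)) * Qi_mul_Q
  · have : qp x y = 0 := not_not.1 fun h => hyx (hsupp x y h)
    simp [hd, hyx, mu, this]

/-- Comparing `c_y`-coordinates in `b_{sw} = T_s b_w`. -/
lemma Q_mul_toLaurent_qp_simple_mul (hcbar : ∀ w : I, D.bar (c w) = c w)
    (hsupp : ∀ w y : I, qp w y ≠ 0 → BrLt cs (y : W) (w : W))
    (htrans : ∀ w : I,
      D.bas w = c w + (qp w).sum fun y p => (Q * Polynomial.toLaurent p) • c y)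
    {s : B} {w : I} (hsa : SA cs I s (w : W)) (y : I) :
    Q * toLaurent (qp ⟨_, hsa.2⟩ y)
      = (if w = y then Q else 0) + (if Desc cs J s (y : W) then mu qp y w else 0)
        + tailCoord cs J qp s w y := by
  have hw : ¬ Desc cs J s (w : W) := not_desc_of_asc D.subset (Or.inl hsa)
  have h := cBasis_repr_T_bas hsupp htrans s w
    (fun z _ => T_c_eq_wgAction hcbar hsupp htrans s z) y
  have hsw : (⟨_, hsa.2⟩ : I) = y ↔ cs.simple s * (w : W) = y := Subtype.ext_iff
  rw [D.act_SA s w hsa, cBasis_repr_bas, T_c_eq_wgAction hcbar hsupp htrans,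
    cBasis_repr_wgAction, if_neg hw] at h
  simp only [hsw] at h
  linear_combination h

lemma qp_simple_mul_self (hcbar : ∀ w : I, D.bar (c w) = c w)
    (hsupp : ∀ w y : I, qp w y ≠ 0 → BrLt cs (y : W) (w : W))
    (htrans : ∀ w : I,
      D.bas w = c w + (qp w).sum fun y p => (Q * Polynomial.toLaurent p) • c y)
    {s : B} {w : I} (hsa : SA cs I s (w : W)) : qp ⟨_, hsa.2⟩ w = 1 := by
  have hw : ¬ Desc cs J s (w : W) := not_desc_of_asc D.subset (Or.inl hsa)
  have hww : qp w w = 0 := not_not.1 fun h => (hsupp w w h).2 rfl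
  have h := Q_mul_toLaurent_qp_simple_mul hcbar hsupp htrans hsa w
  rw [if_pos rfl, if_neg hw, tailCoord_of_not_desc w hw, hww, map_zero, mul_zero, add_zero,
    add_zero, ← mul_one Q, mul_assoc, one_mul] at h
  exact toLaurent_injective (by rw [map_one]; exact mul_left_cancel₀ Q_ne_zero h)

lemma toLaurent_qp_simple_mul_of_asc (hcbar : ∀ w : I, D.bar (c w) = c w)
    (hsupp : ∀ w y : I, qp w y ≠ 0 → BrLt cs (y : W) (w : W))
    (htrans : ∀ w : I,
      D.bas w = c w + (qp w).sum fun y p => (Q * Polynomial.toLaurent p) • c y)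
    {s : B} {w : I} (hsa : SA cs I s (w : W)) {y : I} (hyw : (y : W) ≠ w)
    (hy : Asc cs I J s (y : W)) :
    toLaurent (qp ⟨_, hsa.2⟩ y) = Q * toLaurent (qp w y) := by
  have hy' := not_desc_of_asc D.subset hy
  have h := Q_mul_toLaurent_qp_simple_mul hcbar hsupp htrans hsa y
  rw [if_neg fun h => hyw (congrArg Subtype.val h).symm, if_neg hy',
    tailCoord_of_not_desc w hy', zero_add, zero_add] at h
  exact mul_left_cancel₀ Q_ne_zero (by rw [h]; ring)

lemma toLaurent_qp_simple_mul_of_desc (hcbar : ∀ w : I, D.bar (c w) = c w)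
    (hsupp : ∀ w y : I, qp w y ≠ 0 → BrLt cs (y : W) (w : W))
    (htrans : ∀ w : I,
      D.bas w = c w + (qp w).sum fun y p => (Q * Polynomial.toLaurent p) • c y)
    {s : B} {w : I} (hsa : SA cs I s (w : W)) {y : I} (hyw : (y : W) ≠ w)
    (hy : Desc cs J s (y : W)) :
    toLaurent (qp ⟨_, hsa.2⟩ y)
      = -Qi * (toLaurent (qp w y) - mu qp y w)
        + Qi * (if h : cs.simple s * (y : W) ∈ I then
            if Desc cs J s (cs.simple s * (y : W)) then 0 else Q * toLaurent (qp w ⟨_, h⟩)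
          else 0)
        + ∑ x ∈ (qp w).support, if BrLt cs (y : W) (x : W) ∧ ¬ Desc cs J s (x : W) then
            mu qp y x * toLaurent (qp w x) else 0 := by
  have h := Q_mul_toLaurent_qp_simple_mul hcbar hsupp htrans hsa y
  rw [if_neg fun h => hyw (congrArg Subtype.val h).symm, if_pos hy, tailCoord, if_pos hy,
    if_pos hy] at h
  rw [← Qi_mul_sum_mu_eq hsupp]
  linear_combination Qi * h - toLaurent (qp ⟨_, hsa.2⟩ y) * Qi_mul_Q

end Recursion

theorem stmt9_general (I : Set W) (J : Set B) (D : WGModule cs I J)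
    (c : I → D.V) (qp : I → I →₀ Polynomial ℤ)
    (hcbar : ∀ w : I, D.bar (c w) = c w)
    (hsupp : ∀ w y : I, qp w y ≠ 0 → BrLt cs (y : W) (w : W))
    (htrans : ∀ w : I,
      D.bas w = c w + (qp w).sum fun y p => (Q * Polynomial.toLaurent p) • c y)
    (s : B) (w : I) (hsa : SA cs I s (w : W)) (y : I) :
    ((y : W) = (w : W) → qp ⟨cs.simple s * (w : W), hsa.2⟩ y = 1) ∧
    ((y : W) ≠ (w : W) → Asc cs I J s (y : W) →
      Polynomial.toLaurent (qp ⟨cs.simple s * (w : W), hsa.2⟩ y) =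
        Q * Polynomial.toLaurent (qp w y)) ∧
    ((y : W) ≠ (w : W) → SD cs s (y : W) → ∀ hsy : cs.simple s * (y : W) ∈ I,
      Polynomial.toLaurent (qp ⟨cs.simple s * (w : W), hsa.2⟩ y) =
        -Qi * (Polynomial.toLaurent (qp w y) - (((qp w y).coeff 0 : ℤ) : A))
          + Polynomial.toLaurent (qp w ⟨cs.simple s * (y : W), hsy⟩)
          + ∑ x ∈ (qp w).support,
              if BrLt cs (y : W) (x : W) ∧ ¬ Desc cs J s (x : W) then
                (((qp x y).coeff 0 : ℤ) : A) * Polynomial.toLaurent (qp w x) else 0) ∧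
    ((y : W) ≠ (w : W) → WD cs J s (y : W) →
      Polynomial.toLaurent (qp ⟨cs.simple s * (w : W), hsa.2⟩ y) =
        -Qi * (Polynomial.toLaurent (qp w y) - (((qp w y).coeff 0 : ℤ) : A))
          + ∑ x ∈ (qp w).support,
              if BrLt cs (y : W) (x : W) ∧ ¬ Desc cs J s (x : W) then
                (((qp x y).coeff 0 : ℤ) : A) * Polynomial.toLaurent (qp w x) else 0) := by
  refine ⟨fun hyw => ?_, toLaurent_qp_simple_mul_of_asc hcbar hsupp htrans hsa,
    fun hyw hsd hsy => ?_, fun hyw hwd => ?_⟩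
  · obtain rfl : y = w := Subtype.ext hyw
    exact qp_simple_mul_self hcbar hsupp htrans hsa
  · rw [toLaurent_qp_simple_mul_of_desc hcbar hsupp htrans hsa hyw (Or.inl hsd), dif_pos hsy,
      if_neg (not_desc_simple_mul_of_SD D.subset y.2 hsd), ← mul_assoc, Qi_mul_Q, one_mul]
    rfl
  · rw [toLaurent_qp_simple_mul_of_desc hcbar hsupp htrans hsa hyw (Or.inr hwd),
      dif_neg fun h => hwd.2 (D.subset h), mul_zero, add_zero]
    rfl

/-- the recursion for the polynomials `q_{y,w}`. -/
theorem stmt9 (I : Set W) (J : Set B) (D : WGModule cs I J)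
    (c : I → D.V) (qp : I → I →₀ Polynomial ℤ)
    (hcbar : ∀ w : I, D.bar (c w) = c w)
    (hsupp : ∀ w y : I, qp w y ≠ 0 → BrLt cs (y : W) (w : W))
    (htrans : ∀ w : I,
      D.bas w = c w + (qp w).sum fun y p => (Q * Polynomial.toLaurent p) • c y)
    (s : B) (w : I) (hsa : SA cs I s (w : W)) (y : I)
    (hy : BrLt cs (y : W) (cs.simple s * (w : W))) :
    ((y : W) = (w : W) → qp ⟨cs.simple s * (w : W), hsa.2⟩ y = 1) ∧
    ((y : W) ≠ (w : W) → Asc cs I J s (y : W) →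
      Polynomial.toLaurent (qp ⟨cs.simple s * (w : W), hsa.2⟩ y) =
        Q * Polynomial.toLaurent (qp w y)) ∧
    ((y : W) ≠ (w : W) → SD cs s (y : W) → ∀ hsy : cs.simple s * (y : W) ∈ I,
      Polynomial.toLaurent (qp ⟨cs.simple s * (w : W), hsa.2⟩ y) =
        -Qi * (Polynomial.toLaurent (qp w y) - (((qp w y).coeff 0 : ℤ) : A))
          + Polynomial.toLaurent (qp w ⟨cs.simple s * (y : W), hsy⟩)
          + ∑ x ∈ (qp w).support,
              if BrLt cs (y : W) (x : W) ∧ ¬ Desc cs J s (x : W) then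
                (((qp x y).coeff 0 : ℤ) : A) * Polynomial.toLaurent (qp w x) else 0) ∧
    ((y : W) ≠ (w : W) → WD cs J s (y : W) →
      Polynomial.toLaurent (qp ⟨cs.simple s * (w : W), hsa.2⟩ y) =
        -Qi * (Polynomial.toLaurent (qp w y) - (((qp w y).coeff 0 : ℤ) : A))
          + ∑ x ∈ (qp w).support,
              if BrLt cs (y : W) (x : W) ∧ ¬ Desc cs J s (x : W) then
                (((qp x y).coeff 0 : ℤ) : A) * Polynomial.toLaurent (qp w x) else 0) :=
  stmt9_general I J D c qp hcbar hsupp htrans s w hsa y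

end WGI
end
end
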